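/- arXiv:2504.00598 — 3 statements merged into one kernel-verified Lean document; each statement's English description precedes it below -/
import Mathlib

section
/- Let n ≥ 1, let S be a finite type of parallelism strategies, and let w : Fin n → ℝ be nonnegative edge weights satisfying the refinement property w (n−1) ≤ w i for all i < n. Fix boundary strategies σ₀, σₙ ∈ S. Among all assignments s : Fin (n+1) → S with s 0 = σ₀ and s n = σₙ, the assignment defined by s i = σ₀ for 0 ≤ i ≤ n−1 and s n = σₙ attains the minimum of cost(s) = Σ_{i=0}^{n−1} w i · (if s i ≠ s (i+1) then 1 else 0); moreover this minimum equals w (n−1) if σ₀ ≠ σₙ and equals 0 if σ₀ = σₙ. (This is the paper's Theorem 1: enforcing consistent parallel dimensions throughout a ParallelBlock does not exclude the globally optimal parallelism plan.) -/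
/-! Any assignment whose endpoint strategies differ must change strategy across some edge, and
by the refinement property that edge costs at least the output edge; when the endpoints agree
the cost is trivially nonnegative. The consistent assignment switches at most once, on the output
edge, so it meets both lower bounds. -/

theorem Fin.exists_castSucc_ne_succ {α : Type*} {n : ℕ} {s : Fin (n + 1) → α}
    (h : s 0 ≠ s (Fin.last n)) : ∃ i : Fin n, s i.castSucc ≠ s i.succ := by
  contrapose! h
  induction Fin.last n using Fin.induction with
  | zero => rfl
  | succ i ih => rw [ih, h i]

section SwitchCost

variable {α : Type*} [DecidableEq α] {n : ℕ}

def switchCost (w : Fin n → ℝ) (s : Fin (n + 1) → α) : ℝ :=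
  ∑ i : Fin n, w i * if s i.castSucc ≠ s i.succ then 1 else 0

variable {w : Fin n → ℝ}

theorem switchCost_nonneg (hw : ∀ i, 0 ≤ w i) (s : Fin (n + 1) → α) : 0 ≤ switchCost w s :=
  Finset.sum_nonneg fun i _ => mul_nonneg (hw i) (ite_nonneg zero_le_one le_rfl)

theorem le_switchCost_of_ne (hw : ∀ i, 0 ≤ w i) {s : Fin (n + 1) → α} {c : ℝ}
    (hc : ∀ i, c ≤ w i) (hs : s 0 ≠ s (Fin.last n)) : c ≤ switchCost w s := by
  obtain ⟨i, hi⟩ := Fin.exists_castSucc_ne_succ hs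
  calc c ≤ w i := hc i
    _ = w i * if s i.castSucc ≠ s i.succ then 1 else 0 := by rw [if_pos hi, mul_one]
    _ ≤ switchCost w s :=
      Finset.single_le_sum (f := fun i => w i * if s i.castSucc ≠ s i.succ then 1 else 0)
        (fun j _ => mul_nonneg (hw j) (ite_nonneg zero_le_one le_rfl)) (Finset.mem_univ i)

theorem switchCost_switch_at_last {w : Fin (n + 1) → ℝ} (a b : α) :
    switchCost w (fun j => if j = Fin.last (n + 1) then b else a) =
      if a ≠ b then w (Fin.last n) else 0 := by
  simp [switchCost, Fin.sum_univ_castSucc, (Fin.castSucc_lt_last _).ne]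

end SwitchCost

/-- **Theorem 1 of the paper** (ParallelBlock optimality).
A ParallelBlock with its neighboring operators is a chain of nodes `0, 1, …, n`
with edges `(i, i+1)` carrying nonnegative resharding weights `w i`, where the
refinement property guarantees that the output edge `n-1` is the cheapest:
`w (n-1) ≤ w i`.  Among all assignments `s : Fin (n+1) → S` of parallelism
strategies with boundary conditions `s 0 = σ₀` and `s n = σₙ`, the assignment
that keeps `σ₀` throughout the block and switches (if at all) only on the last
edge attains the minimum communication cost
`cost(s) = ∑ i, w i * (if s i ≠ s (i+1) then 1 else 0)`, and this minimum is
`w (n-1)` when `σ₀ ≠ σₙ` and `0` when `σ₀ = σₙ`. -/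
theorem parallelBlock_consistent_strategy_optimal
    {n : ℕ} (hn : 1 ≤ n) {S : Type*} [DecidableEq S]
    (w : Fin n → ℝ) (hw : ∀ i, 0 ≤ w i)
    (hrefine : ∀ i : Fin n, w ⟨n - 1, by omega⟩ ≤ w i)
    (σ₀ σₙ : S) :
    let cost : (Fin (n + 1) → S) → ℝ :=
      fun s => ∑ i : Fin n, w i * (if s i.castSucc ≠ s i.succ then 1 else 0)
    let sopt : Fin (n + 1) → S := fun j => if j = Fin.last n then σₙ else σ₀
    sopt 0 = σ₀ ∧ sopt (Fin.last n) = σₙ ∧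
      (∀ s : Fin (n + 1) → S, s 0 = σ₀ → s (Fin.last n) = σₙ →
        cost sopt ≤ cost s) ∧
      cost sopt = (if σ₀ ≠ σₙ then w ⟨n - 1, by omega⟩ else 0) := by
  intro cost sopt
  obtain ⟨m, rfl⟩ := Nat.exists_eq_add_of_le' hn
  have hcost : cost sopt = if σ₀ ≠ σₙ then w (Fin.last m) else 0 :=
    switchCost_switch_at_last σ₀ σₙ
  refine ⟨if_neg Fin.last_pos'.ne, if_pos rfl, fun s hs0 hsn => ?_, hcost⟩
  rw [hcost]
  split_ifs with h
  · exact le_switchCost_of_ne hw hrefine (hs0 ▸ hsn ▸ h)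
  · exact switchCost_nonneg hw s
end

section
/- Let A, B₁, B₂, C be positive natural numbers and B = B₁ · B₂. Consider the subgraph consisting of: a reshape splitting the column dimension of an [A, B] tensor into (B₁, B₂); a batched matrix multiplication contracting the B₁ dimension (producing shape [B₂, A, C]); a second batched matrix multiplication contracting the C dimension (producing shape [A, B₁, B₂]); and a reshape merging (B₁, B₂) back into B, with element-level dependency maps: split (a, b₁, b₂) ↦ {(a, B₂·b₁ + b₂)}; first BMM (b₂, a, c) ↦ {(a, b₁′, b₂) : b₁′ ∈ Fin B₁}; second BMM (a, b₁, b₂) ↦ {(b₂, a, c) : c ∈ Fin C}; merge (a, b) ↦ {(a, ⌊b/B₂⌋, b mod B₂)}. Then the composed dependency set of the subgraph output element (a, b) ∈ Fin A × Fin B on the subgraph input elements equals {(a, b′) : b′ ∈ Fin B, b′ mod B₂ = b mod B₂}. In particular, every input element that output element (a, b) depends on has the same row index a and the same column index modulo B₂, so the subgraph is parallelism-preserving when the input is partitioned along the row dimension or along the B₂ sub-dimension of the column. -/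
/-!
Both reshapes are the index bijection `finProdFinEquiv : Fin B₁ × Fin B₂ ≃ Fin (B₁ * B₂)`,
`(b₁, b₂) ↦ B₂ b₁ + b₂`, and its inverse `b ↦ (b / B₂, b % B₂)`. Through the merge, output
`(a, b)` sees only `(a, b / B₂, b % B₂)`; the two batched products together release the `B₁`
index while fixing `a` and `b % B₂` (they pass through some `C` index, which is why `C` must be
nonempty); the split then carries `{(a, b₁, b % B₂) | b₁}` bijectively onto the columns
congruent to `b` modulo `B₂`.
-/

section ReshapeBMMChain

variable (A B₁ B₂ C : ℕ)

/-- Element-level dependency of the reshape splitting the column dimension of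
an `[A, B₁·B₂]` tensor into `(B₁, B₂)`: output element `(a, b₁, b₂)` depends
on the single input element `(a, B₂·b₁ + b₂)`. -/
def splitDep : Fin A × Fin B₁ × Fin B₂ → Set (Fin A × Fin (B₁ * B₂)) :=
  fun x =>
    {(x.1, ⟨B₂ * (x.2.1 : ℕ) + (x.2.2 : ℕ), by
      have h1 := x.2.1.isLt
      have h2 := x.2.2.isLt
      calc B₂ * (x.2.1 : ℕ) + (x.2.2 : ℕ) < B₂ * ((x.2.1 : ℕ) + 1) := by
            rw [Nat.mul_succ]; omega
        _ ≤ B₂ * B₁ := Nat.mul_le_mul_left _ (by omega)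
        _ = B₁ * B₂ := Nat.mul_comm _ _⟩)}

/-- Element-level dependency of the first batched matrix multiplication,
contracting the `B₁` dimension: output element `(b₂, a, c)` of the
`[B₂, A, C]` result depends on the split-tensor elements
`{(a, b₁′, b₂) : b₁′ ∈ Fin B₁}`. -/
def bmm1Dep : Fin B₂ × Fin A × Fin C → Set (Fin A × Fin B₁ × Fin B₂) :=
  fun x => {y | y.1 = x.2.1 ∧ y.2.2 = x.1}

/-- Element-level dependency of the second batched matrix multiplication,
contracting the `C` dimension: output element `(a, b₁, b₂)` of the
`[A, B₁, B₂]` result depends on the elements `{(b₂, a, c) : c ∈ Fin C}`. -/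
def bmm2Dep : Fin A × Fin B₁ × Fin B₂ → Set (Fin B₂ × Fin A × Fin C) :=
  fun x => {p | p.1 = x.2.2 ∧ p.2.1 = x.1}

/-- Element-level dependency of the reshape merging `(B₁, B₂)` back into the
column dimension `B₁·B₂`: output element `(a, b)` depends on the single
element `(a, ⌊b/B₂⌋, b mod B₂)`. -/
def mergeDep (h2 : 0 < B₂) : Fin A × Fin (B₁ * B₂) → Set (Fin A × Fin B₁ × Fin B₂) :=
  fun x =>
    {(x.1, ⟨(x.2 : ℕ) / B₂, (Nat.div_lt_iff_lt_mul h2).mpr x.2.isLt⟩,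
      ⟨(x.2 : ℕ) % B₂, Nat.mod_lt _ h2⟩)}

/-- The composed element-level dependency of the whole subgraph
(split reshape, then two batched matrix multiplications, then merge reshape). -/
def subgraphDep (h2 : 0 < B₂) : Fin A × Fin (B₁ * B₂) → Set (Fin A × Fin (B₁ * B₂)) :=
  fun x => ⋃ p ∈ mergeDep A B₁ B₂ h2 x, ⋃ q ∈ bmm2Dep A B₁ B₂ C p,
    ⋃ s ∈ bmm1Dep A B₁ B₂ C q, splitDep A B₁ B₂ s

variable {A B₁ B₂ C}

theorem splitDep_eq (s : Fin A × Fin B₁ × Fin B₂) :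
    splitDep A B₁ B₂ s = {(s.1, finProdFinEquiv s.2)} := by
  simp only [splitDep, Nat.add_comm]
  rfl

theorem mergeDep_eq (h2 : 0 < B₂) (x : Fin A × Fin (B₁ * B₂)) :
    mergeDep A B₁ B₂ h2 x = {(x.1, finProdFinEquiv.symm x.2)} := by
  rfl

theorem biUnion_bmm2Dep_bmm1Dep (hC : 0 < C) (p : Fin A × Fin B₁ × Fin B₂) :
    ⋃ q ∈ bmm2Dep A B₁ B₂ C p, bmm1Dep A B₁ B₂ C q = {s | s.1 = p.1 ∧ s.2.2 = p.2.2} := by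
  ext s
  simp only [bmm2Dep, bmm1Dep, Set.mem_iUnion, Set.mem_ofPred_eq, exists_prop]
  constructor
  · rintro ⟨q, ⟨hq₁, hq₂⟩, hs₁, hs₂⟩
    exact ⟨hs₁.trans hq₂, hs₂.trans hq₁⟩
  · rintro ⟨hs₁, hs₂⟩
    exact ⟨(p.2.2, p.1, ⟨0, hC⟩), ⟨rfl, rfl⟩, hs₁, hs₂⟩

theorem biUnion_splitDep_eq (a : Fin A) (b₂ : Fin B₂) :
    ⋃ s ∈ {s : Fin A × Fin B₁ × Fin B₂ | s.1 = a ∧ s.2.2 = b₂}, splitDep A B₁ B₂ s =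
      {y | y.1 = a ∧ (y.2 : ℕ) % B₂ = b₂} := by
  ext ⟨a', b⟩
  simp only [splitDep_eq, Set.mem_iUnion, Set.mem_singleton_iff, Set.mem_ofPred_eq, exists_prop,
    Prod.mk.injEq]
  constructor
  · rintro ⟨s, ⟨rfl, rfl⟩, rfl, rfl⟩
    exact ⟨rfl, by simp [Nat.mod_eq_of_lt s.2.2.isLt]⟩
  · rintro ⟨rfl, hb⟩
    refine ⟨(a', finProdFinEquiv.symm b), ⟨rfl, Fin.ext ?_⟩, rfl,
      (Equiv.apply_symm_apply _ _).symm⟩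
    simpa using hb

end ReshapeBMMChain

theorem subgraphDep_eq_row_and_mod_general
    (A B₁ B₂ C : ℕ) (h2 : 0 < B₂) (hC : 0 < C)
    (x : Fin A × Fin (B₁ * B₂)) :
    subgraphDep A B₁ B₂ C h2 x =
      {y : Fin A × Fin (B₁ * B₂) | y.1 = x.1 ∧ (y.2 : ℕ) % B₂ = (x.2 : ℕ) % B₂} := by
  calc subgraphDep A B₁ B₂ C h2 x
      = ⋃ s ∈ ⋃ q ∈ bmm2Dep A B₁ B₂ C (x.1, finProdFinEquiv.symm x.2), bmm1Dep A B₁ B₂ C q,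
          splitDep A B₁ B₂ s := by
        simp only [subgraphDep, mergeDep_eq, Set.biUnion_singleton, Set.biUnion_iUnion]
    _ = _ := by
        rw [biUnion_bmm2Dep_bmm1Dep hC, biUnion_splitDep_eq]
        rfl

/-- The composed dependency set of the subgraph output element `(a, b)` on the
subgraph input elements equals `{(a, b′) : b′ mod B₂ = b mod B₂}`: every input
element that `(a, b)` depends on has the same row index `a` and the same
column index modulo `B₂`.  Hence the subgraph (split reshape; BMM contracting
`B₁`; BMM contracting `C`; merge reshape) is parallelism-preserving when the
input is partitioned along the row dimension or along the `B₂` sub-dimension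
of the column. -/
theorem subgraphDep_eq_row_and_mod
    (A B₁ B₂ C : ℕ) (hA : 0 < A) (h1 : 0 < B₁) (h2 : 0 < B₂) (hC : 0 < C)
    (x : Fin A × Fin (B₁ * B₂)) :
    subgraphDep A B₁ B₂ C h2 x =
      {y : Fin A × Fin (B₁ * B₂) | y.1 = x.1 ∧ (y.2 : ℕ) % B₂ = (x.2 : ℕ) % B₂} :=
  subgraphDep_eq_row_and_mod_general A B₁ B₂ C h2 hC x
end

section
/- Let Bt, S, H, D be positive natural numbers (batch size, sequence length, number of attention heads, and per-head hidden size). Model the self-attention block by the element-level dependency maps: the attention-score tensor element (b, h, s, s′) ∈ Fin Bt × Fin H × Fin S × Fin S depends on Q-elements {(b, s, h, d) : d ∈ Fin D} and K-elements {(b, s′, h, d) : d ∈ Fin D}; the softmax (applied along the last sequence dimension) element (b, h, s, s′) depends on score elements {(b, h, s, t) : t ∈ Fin S}; the weighted-sum output element (b, s, h, d) depends on softmax elements {(b, h, s, s′) : s′ ∈ Fin S} and V-elements {(b, s′, h, d) : s′ ∈ Fin S}; and the final reshape merging the head dimensions makes Y-element (b, s, e) ∈ Fin Bt × Fin S ×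 Fin (H·D) depend on weighted-sum element (b, s, ⌊e/D⌋, e mod D). Then every element of Q, K, or V on which Y(b, s, e) depends through the composed dependency has batch index equal to b and head index equal to ⌊e/D⌋; i.e., the composed dependency sets into Q, K, and V are contained in {(b, s″, ⌊e/D⌋, d) : s″ ∈ Fin S, d ∈ Fin D}. Hence each block of the output tensor Y depends only on the corresponding blocks of Q, K, and V, and self-attention is a parallelism-preserving subgraph with respect to partitioning the batch and head dimensions. -/
/-!
Every elementary dependency map of the attention block sends an index to indices of the same
(batch, head) block, the reshape sending `Y`-index `(b, s, e)` into the block `(b, ⌊e/D⌋)`.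
Block preservation is stable under composition of dependency maps, so the composed
dependencies of `Y` on `Q`, `K`, `V` stay inside that block.
-/

section SelfAttention

variable (Bt S H D : ℕ)

/-- Index space of the tensors `Q`, `K`, `V` and of the weighted-sum output,
all of shape `[Bt, S, H, D]`. -/
abbrev QKVIdx := Fin Bt × Fin S × Fin H × Fin D

/-- Index space of the attention-score (and softmax) tensor of shape
`[Bt, H, S, S]`. -/
abbrev ScoreIdx := Fin Bt × Fin H × Fin S × Fin S

/-- Score element `(b, h, s, s′)` depends on the `Q`-elements
`{(b, s, h, d) : d ∈ Fin D}`. -/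
def scoreDepQ : ScoreIdx Bt S H → Set (QKVIdx Bt S H D) :=
  fun x => {q | q.1 = x.1 ∧ q.2.1 = x.2.2.1 ∧ q.2.2.1 = x.2.1}

/-- Score element `(b, h, s, s′)` depends on the `K`-elements
`{(b, s′, h, d) : d ∈ Fin D}`. -/
def scoreDepK : ScoreIdx Bt S H → Set (QKVIdx Bt S H D) :=
  fun x => {k | k.1 = x.1 ∧ k.2.1 = x.2.2.2 ∧ k.2.2.1 = x.2.1}

/-- Softmax (along the last sequence dimension) element `(b, h, s, s′)`
depends on the score elements `{(b, h, s, t) : t ∈ Fin S}`. -/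
def softmaxDep : ScoreIdx Bt S H → Set (ScoreIdx Bt S H) :=
  fun x => {p | p.1 = x.1 ∧ p.2.1 = x.2.1 ∧ p.2.2.1 = x.2.2.1}

/-- Weighted-sum output element `(b, s, h, d)` depends on the softmax
elements `{(b, h, s, s′) : s′ ∈ Fin S}`. -/
def wsDepSoftmax : QKVIdx Bt S H D → Set (ScoreIdx Bt S H) :=
  fun x => {p | p.1 = x.1 ∧ p.2.1 = x.2.2.1 ∧ p.2.2.1 = x.2.1}

/-- Weighted-sum output element `(b, s, h, d)` depends on the `V`-elements
`{(b, s′, h, d) : s′ ∈ Fin S}`. -/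
def wsDepV : QKVIdx Bt S H D → Set (QKVIdx Bt S H D) :=
  fun x => {v | v.1 = x.1 ∧ v.2.2.1 = x.2.2.1 ∧ v.2.2.2 = x.2.2.2}

/-- The final reshape merging the head dimensions: `Y`-element `(b, s, e)` of
shape `[Bt, S, H·D]` depends on the weighted-sum element
`(b, s, ⌊e/D⌋, e mod D)`. -/
def reshapeDep (hD : 0 < D) : Fin Bt × Fin S × Fin (H * D) → Set (QKVIdx Bt S H D) :=
  fun y =>
    {(y.1, y.2.1, ⟨(y.2.2 : ℕ) / D, (Nat.div_lt_iff_lt_mul hD).mpr y.2.2.isLt⟩,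
      ⟨(y.2.2 : ℕ) % D, Nat.mod_lt _ hD⟩)}

/-- Composed dependency of `Y`-element `(b, s, e)` on the elements of `Q`. -/
def yDepQ (hD : 0 < D) : Fin Bt × Fin S × Fin (H * D) → Set (QKVIdx Bt S H D) :=
  fun y => ⋃ w ∈ reshapeDep Bt S H D hD y, ⋃ p ∈ wsDepSoftmax Bt S H D w,
    ⋃ sc ∈ softmaxDep Bt S H p, scoreDepQ Bt S H D sc

/-- Composed dependency of `Y`-element `(b, s, e)` on the elements of `K`. -/
def yDepK (hD : 0 < D) : Fin Bt × Fin S × Fin (H * D) → Set (QKVIdx Bt S H D) :=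
  fun y => ⋃ w ∈ reshapeDep Bt S H D hD y, ⋃ p ∈ wsDepSoftmax Bt S H D w,
    ⋃ sc ∈ softmaxDep Bt S H p, scoreDepK Bt S H D sc

/-- Composed dependency of `Y`-element `(b, s, e)` on the elements of `V`. -/
def yDepV (hD : 0 < D) : Fin Bt × Fin S × Fin (H * D) → Set (QKVIdx Bt S H D) :=
  fun y => ⋃ w ∈ reshapeDep Bt S H D hD y, wsDepV Bt S H D w

end SelfAttention

def PreservesBlocks {α β κ : Type*} (F : α → Set β) (kα : α → κ) (kβ : β → κ) : Prop :=
  ∀ a, ∀ b ∈ F a, kβ b = kα a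

theorem PreservesBlocks.comp {α β γ κ : Type*} {F : α → Set β} {G : β → Set γ}
    {kα : α → κ} {kβ : β → κ} {kγ : γ → κ}
    (hF : PreservesBlocks F kα kβ) (hG : PreservesBlocks G kβ kγ) :
    PreservesBlocks (fun a => ⋃ b ∈ F a, G b) kα kγ := by
  intro a c hc
  obtain ⟨b, hb, hcb⟩ := Set.mem_iUnion₂.mp hc
  rw [hG b c hcb, hF a b hb]

section SelfAttention

variable {Bt S H D : ℕ}

/-- The (batch, head) block of an index; the head is taken in `ℕ` so that it can be compared
with `⌊e/D⌋` for `Y`-indices without a bound proof. -/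
def qkvBlock (x : QKVIdx Bt S H D) : Fin Bt × ℕ := (x.1, x.2.2.1)

def scoreBlock (x : ScoreIdx Bt S H) : Fin Bt × ℕ := (x.1, x.2.1)

def yBlock (y : Fin Bt × Fin S × Fin (H * D)) : Fin Bt × ℕ := (y.1, y.2.2 / D)

theorem scoreDepQ_preservesBlocks :
    PreservesBlocks (scoreDepQ Bt S H D) scoreBlock qkvBlock := by
  rintro x q ⟨hb, -, hh⟩
  simp [qkvBlock, scoreBlock, hb, hh]

theorem scoreDepK_preservesBlocks :
    PreservesBlocks (scoreDepK Bt S H D) scoreBlock qkvBlock := by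
  rintro x k ⟨hb, -, hh⟩
  simp [qkvBlock, scoreBlock, hb, hh]

theorem softmaxDep_preservesBlocks :
    PreservesBlocks (softmaxDep Bt S H) scoreBlock scoreBlock := by
  rintro x p ⟨hb, hh, -⟩
  simp [scoreBlock, hb, hh]

theorem wsDepSoftmax_preservesBlocks :
    PreservesBlocks (wsDepSoftmax Bt S H D) qkvBlock scoreBlock := by
  rintro x p ⟨hb, hh, -⟩
  simp [qkvBlock, scoreBlock, hb, hh]

theorem wsDepV_preservesBlocks :
    PreservesBlocks (wsDepV Bt S H D) qkvBlock qkvBlock := by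
  rintro x v ⟨hb, hh, -⟩
  simp [qkvBlock, hb, hh]

theorem reshapeDep_preservesBlocks (hD : 0 < D) :
    PreservesBlocks (reshapeDep Bt S H D hD) yBlock qkvBlock := by
  rintro y w rfl
  rfl

theorem yDepQ_preservesBlocks (hD : 0 < D) :
    PreservesBlocks (yDepQ Bt S H D hD) yBlock qkvBlock :=
  (reshapeDep_preservesBlocks hD).comp <| wsDepSoftmax_preservesBlocks.comp <|
    softmaxDep_preservesBlocks.comp scoreDepQ_preservesBlocks

theorem yDepK_preservesBlocks (hD : 0 < D) :
    PreservesBlocks (yDepK Bt S H D hD) yBlock qkvBlock :=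
  (reshapeDep_preservesBlocks hD).comp <| wsDepSoftmax_preservesBlocks.comp <|
    softmaxDep_preservesBlocks.comp scoreDepK_preservesBlocks

theorem yDepV_preservesBlocks (hD : 0 < D) :
    PreservesBlocks (yDepV Bt S H D hD) yBlock qkvBlock :=
  (reshapeDep_preservesBlocks hD).comp wsDepV_preservesBlocks

end SelfAttention

theorem selfAttention_parallelism_preserving_general
    (Bt S H D : ℕ) (hD : 0 < D)
    (y : Fin Bt × Fin S × Fin (H * D)) :
    (yDepQ Bt S H D hD y ⊆
        {q : QKVIdx Bt S H D | q.1 = y.1 ∧ (q.2.2.1 : ℕ) = (y.2.2 : ℕ) / D}) ∧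
    (yDepK Bt S H D hD y ⊆
        {k : QKVIdx Bt S H D | k.1 = y.1 ∧ (k.2.2.1 : ℕ) = (y.2.2 : ℕ) / D}) ∧
    (yDepV Bt S H D hD y ⊆
        {v : QKVIdx Bt S H D | v.1 = y.1 ∧ (v.2.2.1 : ℕ) = (y.2.2 : ℕ) / D}) := by
  exact ⟨fun q hq => Prod.ext_iff.mp (yDepQ_preservesBlocks hD y q hq),
    fun k hk => Prod.ext_iff.mp (yDepK_preservesBlocks hD y k hk),
    fun v hv => Prod.ext_iff.mp (yDepV_preservesBlocks hD y v hv)⟩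

/-- Every element of `Q`, `K`, or `V` on which the self-attention output
element `Y(b, s, e)` depends (through the composed element-level dependency)
has batch index `b` and head index `⌊e/D⌋`; i.e. the composed dependency sets
into `Q`, `K` and `V` are contained in
`{(b, s″, ⌊e/D⌋, d) : s″ ∈ Fin S, d ∈ Fin D}`.  Hence each block of the output
tensor `Y` depends only on the corresponding blocks of `Q`, `K`, and `V`, and
self-attention is a parallelism-preserving subgraph with respect to
partitioning the batch and head dimensions. -/
theorem selfAttention_parallelism_preserving
    (Bt S H D : ℕ) (hBt : 0 < Bt) (hS : 0 < S) (hH : 0 < H) (hD : 0 < D)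
    (y : Fin Bt × Fin S × Fin (H * D)) :
    (yDepQ Bt S H D hD y ⊆
        {q : QKVIdx Bt S H D | q.1 = y.1 ∧ (q.2.2.1 : ℕ) = (y.2.2 : ℕ) / D}) ∧
    (yDepK Bt S H D hD y ⊆
        {k : QKVIdx Bt S H D | k.1 = y.1 ∧ (k.2.2.1 : ℕ) = (y.2.2 : ℕ) / D}) ∧
    (yDepV Bt S H D hD y ⊆
        {v : QKVIdx Bt S H D | v.1 = y.1 ∧ (v.2.2.1 : ℕ) = (y.2.2 : ℕ) / D}) :=
  selfAttention_parallelism_preserving_general Bt S H D hD y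
end
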